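/- Let A be a 6-by-6 reciprocal matrix. The Hermitian matrix Im A has an eigenvalue of algebraic multiplicity at least 2 if and only if one of the following (mutually exclusive) conditions holds: (i) ξ₁ξ₃ξ₅ = 0; (ii) ξ₂ = ξ₄ = 0, ξ₁ξ₃ξ₅ ≠ 0, and ξ₁, ξ₃, ξ₅ are not all distinct; (iii) ξ₂ = 0, ξ₁ξ₃ξ₄ξ₅ ≠ 0, and ξ₁ξ₄ = (ξ₁ − ξ₅)(ξ₁ − ξ₃); (iv) ξ₄ = 0, ξ₁ξ₂ξ₃ξ₅ ≠ 0, and ξ₂ξ₅ = (ξ₁ − ξ₅)(ξ₃ − ξ₅). (This is the criterion for the Kippenhahn curve of A to have multiple tangent lines.) -/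

import Mathlib

/-!
`Im A` is a Hermitian tridiagonal matrix with zero diagonal, and its off-diagonal products
`(Im A)ᵢ,ᵢ₊₁ (Im A)ᵢ₊₁,ᵢ = |(Im A)ᵢ,ᵢ₊₁|²` are exactly the `ξᵢ`. Expanding the determinant, its
characteristic polynomial is `g(X²)` for a cubic `g` whose coefficients are sums of products of
pairwise non-adjacent `ξᵢ`, with constant term `-ξ₁ξ₃ξ₅`. A polynomial `g(X²)` has a multiple root
iff `g(0) = 0` or `g` has a multiple root, and a multiple root of a real cubic is real.

What is left is real algebra. For `ξ₂ = 0` the cubic factors as `(X - ξ₁) q` with a quadratic `q`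
of nonnegative discriminant, the case `ξ₄ = 0` is the same after reversing the order of the `ξᵢ`,
and when all `ξᵢ` are positive a sum-of-squares identity rules out a double root.
-/

open Matrix Polynomial

/-- A tridiagonal complex matrix with zero main diagonal whose symmetric
off-diagonal entries have pairwise products equal to one. -/
def IsReciprocal {n : ℕ} (A : Matrix (Fin n) (Fin n) ℂ) : Prop :=
  (∀ i j : Fin n, ((i : ℤ) - (j : ℤ)) ^ 2 ≠ 1 → A i j = 0) ∧
  ∀ i j : Fin n, (j : ℕ) = (i : ℕ) + 1 → A i j * A j i = 1

/-- The Hermitian matrix `Im A = (A - A*)/(2i)`. -/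
noncomputable def imPart {n : ℕ} (A : Matrix (Fin n) (Fin n) ℂ) :
    Matrix (Fin n) (Fin n) ℂ :=
  (2 * Complex.I)⁻¹ • (A - Aᴴ)

open ComplexConjugate

theorem exists_two_le_rootMultiplicity_comp_X_sq_iff {K : Type*} [Field K] [IsAlgClosed K]
    [CharZero K] {g : K[X]} (hg : g ≠ 0) :
    (∃ μ, 2 ≤ (g.comp (X ^ 2)).rootMultiplicity μ) ↔
      g.IsRoot 0 ∨ ∃ y, g.IsRoot y ∧ (derivative g).IsRoot y := by
  show (∃ μ, 1 < _) ↔ _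
  have hg' : g.comp (X ^ 2) ≠ 0 := by
    rw [Ne, comp_eq_zero_iff]
    rintro (h | ⟨-, h⟩)
    · exact hg h
    · simpa using congrArg (coeff · 2) h
  simp only [one_lt_rootMultiplicity_iff_isRoot hg', derivative_comp, IsRoot, eval_comp,
    eval_mul, derivative_X_pow, eval_pow, eval_X, eval_C]
  constructor
  · rintro ⟨μ, hμ, hμ'⟩
    rcases eq_or_ne μ 0 with rfl | hμ0
    · left
      simpa using hμ
    · right
      refine ⟨μ ^ 2, hμ, ?_⟩
      simpa [hμ0] using hμ'
  · rintro (h0 | ⟨y, hy, hy'⟩)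
    · exact ⟨0, by simpa using h0, by simp⟩
    · obtain ⟨μ, rfl⟩ := IsAlgClosed.exists_pow_nat_eq y two_pos
      exact ⟨μ, hy, by simp [hy']⟩

/-- The cubic `g` with `M.charpoly = g(X²)` for a zero-diagonal tridiagonal `6 × 6` matrix `M` whose
off-diagonal products are `x₁, …, x₅`; its coefficients sum the products of pairwise non-adjacent
`xᵢ`. -/
noncomputable def tridiagCubic {R : Type*} [CommRing R] (x₁ x₂ x₃ x₄ x₅ : R) : R[X] :=
  X ^ 3 - C (x₁ + x₂ + x₃ + x₄ + x₅) * X ^ 2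
    + C (x₁ * x₃ + x₁ * x₄ + x₁ * x₅ + x₂ * x₄ + x₂ * x₅ + x₃ * x₅) * X - C (x₁ * x₃ * x₅)

section CommRing

variable {R : Type*} [CommRing R]

theorem tridiagCubic_ne_zero [Nontrivial R] (x₁ x₂ x₃ x₄ x₅ : R) :
    tridiagCubic x₁ x₂ x₃ x₄ x₅ ≠ 0 := by
  intro h
  have h3 := congrArg (coeff · 3) h
  simp only [tridiagCubic, coeff_sub, coeff_add, coeff_C_mul, coeff_X_pow, coeff_X, coeff_C]
    at h3
  simp at h3

@[simp]
theorem eval_tridiagCubic (x₁ x₂ x₃ x₄ x₅ u : R) :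
    (tridiagCubic x₁ x₂ x₃ x₄ x₅).eval u = u ^ 3 - (x₁ + x₂ + x₃ + x₄ + x₅) * u ^ 2
      + (x₁ * x₃ + x₁ * x₄ + x₁ * x₅ + x₂ * x₄ + x₂ * x₅ + x₃ * x₅) * u - x₁ * x₃ * x₅ := by
  simp [tridiagCubic]

@[simp]
theorem eval_derivative_tridiagCubic (x₁ x₂ x₃ x₄ x₅ u : R) :
    (derivative (tridiagCubic x₁ x₂ x₃ x₄ x₅)).eval u = 3 * u ^ 2 - 2 * (x₁ + x₂ + x₃ + x₄ + x₅) * u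
      + (x₁ * x₃ + x₁ * x₄ + x₁ * x₅ + x₂ * x₄ + x₂ * x₅ + x₃ * x₅) := by
  simp only [tridiagCubic, derivative_sub, derivative_add, derivative_mul, derivative_C,
    derivative_X_pow, derivative_X, eval_add, eval_sub, eval_mul, eval_C, eval_pow, eval_X,
    eval_zero, eval_one]
  push_cast
  ring

theorem isRoot_zero_tridiagCubic_iff (x₁ x₂ x₃ x₄ x₅ : R) :
    (tridiagCubic x₁ x₂ x₃ x₄ x₅).IsRoot 0 ↔ x₁ * x₃ * x₅ = 0 := by
  simp [IsRoot]

theorem tridiagCubic_map {S : Type*} [CommRing S] (f : R →+* S) (x₁ x₂ x₃ x₄ x₅ : R) :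
    (tridiagCubic x₁ x₂ x₃ x₄ x₅).map f = tridiagCubic (f x₁) (f x₂) (f x₃) (f x₄) (f x₅) := by
  simp [tridiagCubic]

theorem tridiagCubic_reverse (x₁ x₂ x₃ x₄ x₅ : R) :
    tridiagCubic x₅ x₄ x₃ x₂ x₁ = tridiagCubic x₁ x₂ x₃ x₄ x₅ := by
  unfold tridiagCubic
  rw [show x₅ + x₄ + x₃ + x₂ + x₁ = x₁ + x₂ + x₃ + x₄ + x₅ by ring,
    show x₅ * x₃ + x₅ * x₂ + x₅ * x₁ + x₄ * x₂ + x₄ * x₁ + x₃ * x₁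
      = x₁ * x₃ + x₁ * x₄ + x₁ * x₅ + x₂ * x₄ + x₂ * x₅ + x₃ * x₅ by ring,
    show x₅ * x₃ * x₁ = x₁ * x₃ * x₅ by ring]

theorem charpoly_eq_tridiagCubic_comp (M : Matrix (Fin 6) (Fin 6) R)
    (hM : ∀ i j : Fin 6, ((i : ℤ) - j) ^ 2 ≠ 1 → M i j = 0) :
    M.charpoly = (tridiagCubic (M 0 1 * M 1 0) (M 1 2 * M 2 1) (M 2 3 * M 3 2)
      (M 3 4 * M 4 3) (M 4 5 * M 5 4)).comp (X ^ 2) := by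
  have hcm : charmatrix M =
      !![X, -C (M 0 1), 0, 0, 0, 0;
         -C (M 1 0), X, -C (M 1 2), 0, 0, 0;
         0, -C (M 2 1), X, -C (M 2 3), 0, 0;
         0, 0, -C (M 3 2), X, -C (M 3 4), 0;
         0, 0, 0, -C (M 4 3), X, -C (M 4 5);
         0, 0, 0, 0, -C (M 5 4), X] := by
    ext1 i j
    fin_cases i <;> fin_cases j <;> simp [hM]
  rw [Matrix.charpoly, hcm]
  simp [det_succ_row_zero, Fin.sum_univ_succ, Fin.succAbove, tridiagCubic]
  ring

end CommRing

section Real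

variable {x₁ x₂ x₃ x₄ x₅ u : ℝ}

theorem im_eq_zero_of_isRoot_derivative_tridiagCubic {y : ℂ}
    (hy : (tridiagCubic (x₁ : ℂ) x₂ x₃ x₄ x₅).IsRoot y)
    (hy' : (derivative (tridiagCubic (x₁ : ℂ) x₂ x₃ x₄ x₅)).IsRoot y) : y.im = 0 := by
  have him := congrArg Complex.im hy
  have hre' := congrArg Complex.re hy'
  simp only [eval_tridiagCubic, eval_derivative_tridiagCubic, pow_succ, pow_zero, one_mul,
    Complex.add_re, Complex.sub_re, Complex.mul_re, Complex.add_im, Complex.sub_im,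
    Complex.mul_im, Complex.ofReal_re, Complex.ofReal_im, Complex.re_ofNat, Complex.im_ofNat,
    Complex.zero_re, Complex.zero_im, mul_zero, zero_mul, add_zero, sub_zero] at him hre'
  have hcube : 2 * y.im ^ 3 = 0 := by linear_combination him - y.im * hre'
  simpa using hcube

theorem exists_isRoot_derivative_tridiagCubic_ofReal_iff :
    (∃ y : ℂ, (tridiagCubic (x₁ : ℂ) x₂ x₃ x₄ x₅).IsRoot y ∧
        (derivative (tridiagCubic (x₁ : ℂ) x₂ x₃ x₄ x₅)).IsRoot y) ↔
      ∃ u : ℝ, (tridiagCubic x₁ x₂ x₃ x₄ x₅).IsRoot u ∧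
        (derivative (tridiagCubic x₁ x₂ x₃ x₄ x₅)).IsRoot u := by
  have hmap : (tridiagCubic x₁ x₂ x₃ x₄ x₅).map Complex.ofRealHom
      = tridiagCubic (x₁ : ℂ) x₂ x₃ x₄ x₅ :=
    tridiagCubic_map _ _ _ _ _ _
  have hroot (u : ℝ) (p : ℝ[X]) : (p.map Complex.ofRealHom).IsRoot u ↔ p.IsRoot u :=
    isRoot_map_iff Complex.ofRealHom.injective
  constructor
  · rintro ⟨y, hy, hy'⟩
    obtain ⟨u, rfl⟩ : ∃ u : ℝ, (u : ℂ) = y :=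
      ⟨y.re, Complex.ext rfl (im_eq_zero_of_isRoot_derivative_tridiagCubic hy hy').symm⟩
    rw [← hmap, hroot] at hy
    rw [← hmap, derivative_map, hroot] at hy'
    exact ⟨u, hy, hy'⟩
  · rintro ⟨u, hu, hu'⟩
    refine ⟨u, ?_, ?_⟩
    · rwa [← hmap, hroot]
    · rwa [← hmap, derivative_map, hroot]

theorem pos_of_isRoot_tridiagCubic (h₁ : 0 ≤ x₁) (h₂ : 0 ≤ x₂) (h₃ : 0 ≤ x₃) (h₄ : 0 ≤ x₄)
    (h₅ : 0 ≤ x₅) (h₁₃₅ : 0 < x₁ * x₃ * x₅) (hu : (tridiagCubic x₁ x₂ x₃ x₄ x₅).IsRoot u) :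
    0 < u := by
  rw [IsRoot, eval_tridiagCubic] at hu
  by_contra! hu0
  have he₁ : 0 ≤ x₁ + x₂ + x₃ + x₄ + x₅ := by positivity
  have he₂ : 0 ≤ x₁ * x₃ + x₁ * x₄ + x₁ * x₅ + x₂ * x₄ + x₂ * x₅ + x₃ * x₅ := by positivity
  nlinarith [mul_nonneg he₁ (sq_nonneg u), mul_nonneg he₂ (neg_nonneg.mpr hu0),
    pow_two_nonneg u, mul_nonneg (sq_nonneg u) (neg_nonneg.mpr hu0)]

theorem not_isRoot_derivative_tridiagCubic_of_pos (h₁ : 0 < x₁) (h₂ : 0 < x₂) (h₃ : 0 < x₃)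
    (h₄ : 0 < x₄) (h₅ : 0 < x₅) (hu : (tridiagCubic x₁ x₂ x₃ x₄ x₅).IsRoot u) :
    ¬ (derivative (tridiagCubic x₁ x₂ x₃ x₄ x₅)).IsRoot u := by
  intro hu'
  have hu0 := pos_of_isRoot_tridiagCubic h₁.le h₂.le h₃.le h₄.le h₅.le (by positivity) hu
  rw [IsRoot, eval_tridiagCubic] at hu
  rw [IsRoot, eval_derivative_tridiagCubic] at hu'
  set w := u * (u - x₁ - x₂) - x₃ * (u - x₁) - x₄ * (u - x₁ - x₂)
  have hsos : x₅ * (u * (u - x₁ - x₂) - x₃ * (u - x₁)) ^ 2 + x₃ * x₄ * x₅ * (u - x₁) ^ 2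
      + u * (w ^ 2 + x₄ * x₅ * (u - x₁ - x₂) ^ 2 + x₂ * x₃ * x₄ * x₅)
      + x₁ * x₂ * x₃ * x₄ * x₅ = 0 := by
    linear_combination 2 * u * w * hu' - (w + 2 * u * (2 * u - (x₁ + x₂ + x₃ + x₄))) * hu
  refine absurd hsos ?_
  positivity

theorem isRoot_derivative_tridiagCubic_of_snd_eq_zero (h₃ : 0 ≤ x₃) (h₄ : 0 ≤ x₄)
    (h₅ : 0 ≤ x₅) (hu : (tridiagCubic x₁ 0 x₃ x₄ x₅).IsRoot u)
    (hu' : (derivative (tridiagCubic x₁ 0 x₃ x₄ x₅)).IsRoot u) :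
    x₁ * x₄ = (x₁ - x₅) * (x₁ - x₃) ∨ (x₄ = 0 ∧ x₃ = x₅) := by
  rw [IsRoot, eval_tridiagCubic] at hu
  rw [IsRoot, eval_derivative_tridiagCubic] at hu'
  set s := x₃ + x₄ + x₅
  have hfac : (u - x₁) * (u ^ 2 - s * u + x₃ * x₅) = 0 := by linear_combination hu
  have hder : (u ^ 2 - s * u + x₃ * x₅) + (u - x₁) * (2 * u - s) = 0 := by
    linear_combination hu'
  rcases eq_or_ne u x₁ with rfl | hne
  · left
    linear_combination -hder
  · right
    have hq : u ^ 2 - s * u + x₃ * x₅ = 0 :=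
      (mul_eq_zero.mp hfac).resolve_left (sub_ne_zero.mpr hne)
    have hq' : 2 * u - s = 0 := by
      rw [hq, zero_add] at hder
      exact (mul_eq_zero.mp hder).resolve_left (sub_ne_zero.mpr hne)
    have hdisc : (x₃ - x₅) ^ 2 + x₄ * (2 * x₃ + 2 * x₅ + x₄) = 0 := by
      linear_combination (2 * u - s) * hq' - 4 * hq
    have hx₄ : x₄ = 0 := by nlinarith [sq_nonneg (x₃ - x₅)]
    refine ⟨hx₄, ?_⟩
    rw [hx₄, zero_mul, add_zero] at hdisc
    exact sub_eq_zero.mp (pow_eq_zero_iff two_ne_zero |>.mp hdisc)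

theorem isRoot_derivative_tridiagCubic_cases (h₁ : 0 ≤ x₁) (h₂ : 0 ≤ x₂) (h₃ : 0 ≤ x₃)
    (h₄ : 0 ≤ x₄) (h₅ : 0 ≤ x₅) (h₁₃₅ : x₁ * x₃ * x₅ ≠ 0)
    (hu : (tridiagCubic x₁ x₂ x₃ x₄ x₅).IsRoot u)
    (hu' : (derivative (tridiagCubic x₁ x₂ x₃ x₄ x₅)).IsRoot u) :
    (x₂ = 0 ∧ x₄ = 0 ∧ x₁ * x₃ * x₅ ≠ 0 ∧ (x₁ = x₃ ∨ x₁ = x₅ ∨ x₃ = x₅)) ∨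
      (x₂ = 0 ∧ x₁ * x₃ * x₄ * x₅ ≠ 0 ∧ x₁ * x₄ = (x₁ - x₅) * (x₁ - x₃)) ∨
      (x₄ = 0 ∧ x₁ * x₂ * x₃ * x₅ ≠ 0 ∧ x₂ * x₅ = (x₁ - x₅) * (x₃ - x₅)) := by
  obtain ⟨⟨hx₁, hx₃⟩, hx₅⟩ : (x₁ ≠ 0 ∧ x₃ ≠ 0) ∧ x₅ ≠ 0 := by simpa using h₁₃₅
  rcases eq_or_ne x₂ 0 with rfl | hx₂
  · rcases isRoot_derivative_tridiagCubic_of_snd_eq_zero h₃ h₄ h₅ hu hu' with h | ⟨rfl, h₃₅⟩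
    · rcases eq_or_ne x₄ 0 with rfl | hx₄
      · have h' : (x₁ - x₅) * (x₁ - x₃) = 0 := by linear_combination -h
        rcases mul_eq_zero.mp h' with h' | h'
        · exact .inl ⟨rfl, rfl, h₁₃₅, .inr (.inl (sub_eq_zero.mp h'))⟩
        · exact .inl ⟨rfl, rfl, h₁₃₅, .inl (sub_eq_zero.mp h')⟩
      · exact .inr (.inl ⟨rfl, by simp [*], h⟩)
    · exact .inl ⟨rfl, rfl, h₁₃₅, .inr (.inr h₃₅)⟩
  rcases eq_or_ne x₄ 0 with rfl | hx₄
  · rw [← tridiagCubic_reverse] at hu hu'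
    rcases isRoot_derivative_tridiagCubic_of_snd_eq_zero h₃ h₂ h₁ hu hu' with h | ⟨rfl, -⟩
    · exact .inr (.inr ⟨rfl, by simp [*], by linear_combination h⟩)
    · exact absurd rfl hx₂
  exact absurd hu' (not_isRoot_derivative_tridiagCubic_of_pos (h₁.lt_of_ne' hx₁)
    (h₂.lt_of_ne' hx₂) (h₃.lt_of_ne' hx₃) (h₄.lt_of_ne' hx₄) (h₅.lt_of_ne' hx₅) hu)

theorem exists_isRoot_derivative_tridiagCubic_of_cases
    (h : (x₂ = 0 ∧ x₄ = 0 ∧ x₁ * x₃ * x₅ ≠ 0 ∧ (x₁ = x₃ ∨ x₁ = x₅ ∨ x₃ = x₅)) ∨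
      (x₂ = 0 ∧ x₁ * x₃ * x₄ * x₅ ≠ 0 ∧ x₁ * x₄ = (x₁ - x₅) * (x₁ - x₃)) ∨
      (x₄ = 0 ∧ x₁ * x₂ * x₃ * x₅ ≠ 0 ∧ x₂ * x₅ = (x₁ - x₅) * (x₃ - x₅))) :
    ∃ u : ℝ, (tridiagCubic x₁ x₂ x₃ x₄ x₅).IsRoot u ∧
      (derivative (tridiagCubic x₁ x₂ x₃ x₄ x₅)).IsRoot u := by
  simp only [IsRoot, eval_tridiagCubic, eval_derivative_tridiagCubic]
  rcases h with ⟨rfl, rfl, -, rfl | rfl | rfl⟩ | ⟨rfl, -, h⟩ | ⟨rfl, -, h⟩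
  · exact ⟨x₁, by ring, by ring⟩
  · exact ⟨x₁, by ring, by ring⟩
  · exact ⟨x₃, by ring, by ring⟩
  · exact ⟨x₁, by ring, by linear_combination -h⟩
  · exact ⟨x₅, by ring, by linear_combination -h⟩

theorem mul_eq_zero_or_exists_isRoot_derivative_tridiagCubic_iff (h₁ : 0 ≤ x₁) (h₂ : 0 ≤ x₂)
    (h₃ : 0 ≤ x₃) (h₄ : 0 ≤ x₄) (h₅ : 0 ≤ x₅) :
    (x₁ * x₃ * x₅ = 0 ∨ ∃ u : ℝ, (tridiagCubic x₁ x₂ x₃ x₄ x₅).IsRoot u ∧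
        (derivative (tridiagCubic x₁ x₂ x₃ x₄ x₅)).IsRoot u) ↔
      (x₁ * x₃ * x₅ = 0 ∨
        (x₂ = 0 ∧ x₄ = 0 ∧ x₁ * x₃ * x₅ ≠ 0 ∧ (x₁ = x₃ ∨ x₁ = x₅ ∨ x₃ = x₅)) ∨
        (x₂ = 0 ∧ x₁ * x₃ * x₄ * x₅ ≠ 0 ∧ x₁ * x₄ = (x₁ - x₅) * (x₁ - x₃)) ∨
        (x₄ = 0 ∧ x₁ * x₂ * x₃ * x₅ ≠ 0 ∧ x₂ * x₅ = (x₁ - x₅) * (x₃ - x₅))) := by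
  refine or_congr_right' fun h₁₃₅ => ⟨?_, exists_isRoot_derivative_tridiagCubic_of_cases⟩
  rintro ⟨u, hu, hu'⟩
  exact isRoot_derivative_tridiagCubic_cases h₁ h₂ h₃ h₄ h₅ h₁₃₅ hu hu'

end Real

theorem normSq_inv_two_I_mul_sub_conj {a c : ℂ} (h : a * c = 1) :
    Complex.normSq ((2 * Complex.I)⁻¹ * (a - conj c)) = (‖a‖ - ‖c‖) ^ 2 / 4 := by
  have hnorm : ‖a‖ * ‖c‖ = 1 := by rw [← norm_mul, h, norm_one]
  have hre : (a * c).re = 1 := by rw [h, Complex.one_re]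
  rw [map_mul, map_inv₀, Complex.normSq_sub, Complex.normSq_conj, Complex.conj_conj, hre,
    Complex.normSq_mul, Complex.normSq_ofNat, Complex.normSq_I, ← Complex.sq_norm,
    ← Complex.sq_norm]
  linear_combination hnorm / 2

section imPart

variable {n : ℕ} (A : Matrix (Fin n) (Fin n) ℂ)

theorem imPart_apply (i j : Fin n) :
    imPart A i j = (2 * Complex.I)⁻¹ * (A i j - conj (A j i)) := by
  simp [imPart]

theorem imPart_apply_swap (i j : Fin n) : imPart A j i = conj (imPart A i j) := by
  rw [imPart_apply, imPart_apply, map_mul, map_sub, Complex.conj_conj, map_inv₀, map_mul,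
    Complex.conj_I, Complex.conj_ofNat]
  ring

variable {A}

theorem IsReciprocal.imPart_apply_eq_zero (hA : IsReciprocal A) {i j : Fin n}
    (hij : ((i : ℤ) - j) ^ 2 ≠ 1) : imPart A i j = 0 := by
  have hji : ((j : ℤ) - i) ^ 2 ≠ 1 := by rwa [← neg_sub, neg_sq]
  rw [imPart_apply, hA.1 i j hij, hA.1 j i hji, map_zero, sub_zero, mul_zero]

theorem IsReciprocal.imPart_apply_mul_apply_swap (hA : IsReciprocal A) {i j : Fin n}
    (hij : (j : ℕ) = i + 1) :
    imPart A i j * imPart A j i = ((‖A i j‖ - ‖A j i‖) ^ 2 / 4 : ℝ) := by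
  rw [imPart_apply_swap A i j, Complex.mul_conj, imPart_apply,
    normSq_inv_two_I_mul_sub_conj (hA.2 i j hij)]

end imPart

/-- Criterion for `Im A` of a 6-by-6 reciprocal matrix to have a multiple
eigenvalue (i.e. for the Kippenhahn curve to have multiple tangent lines). -/
theorem imPart_multiple_eigenvalue_iff_six (A : Matrix (Fin 6) (Fin 6) ℂ) (hA : IsReciprocal A)
    (ξ₁ ξ₂ ξ₃ ξ₄ ξ₅ : ℝ)
    (h1 : ξ₁ = (‖A 0 1‖ - ‖A 1 0‖) ^ 2 / 4)
    (h2 : ξ₂ = (‖A 1 2‖ - ‖A 2 1‖) ^ 2 / 4)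
    (h3 : ξ₃ = (‖A 2 3‖ - ‖A 3 2‖) ^ 2 / 4)
    (h4 : ξ₄ = (‖A 3 4‖ - ‖A 4 3‖) ^ 2 / 4)
    (h5 : ξ₅ = (‖A 4 5‖ - ‖A 5 4‖) ^ 2 / 4) :
    (∃ μ : ℂ, 2 ≤ (imPart A).charpoly.rootMultiplicity μ) ↔
      (ξ₁ * ξ₃ * ξ₅ = 0 ∨
       (ξ₂ = 0 ∧ ξ₄ = 0 ∧ ξ₁ * ξ₃ * ξ₅ ≠ 0 ∧ (ξ₁ = ξ₃ ∨ ξ₁ = ξ₅ ∨ ξ₃ = ξ₅)) ∨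
       (ξ₂ = 0 ∧ ξ₁ * ξ₃ * ξ₄ * ξ₅ ≠ 0 ∧ ξ₁ * ξ₄ = (ξ₁ - ξ₅) * (ξ₁ - ξ₃)) ∨
       (ξ₄ = 0 ∧ ξ₁ * ξ₂ * ξ₃ * ξ₅ ≠ 0 ∧ ξ₂ * ξ₅ = (ξ₁ - ξ₅) * (ξ₃ - ξ₅))) := by
  have hchar : (imPart A).charpoly = (tridiagCubic (ξ₁ : ℂ) ξ₂ ξ₃ ξ₄ ξ₅).comp (X ^ 2) := by
    rw [charpoly_eq_tridiagCubic_comp _ fun _ _ => hA.imPart_apply_eq_zero,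
      hA.imPart_apply_mul_apply_swap (i := 0) (j := 1) rfl,
      hA.imPart_apply_mul_apply_swap (i := 1) (j := 2) rfl,
      hA.imPart_apply_mul_apply_swap (i := 2) (j := 3) rfl,
      hA.imPart_apply_mul_apply_swap (i := 3) (j := 4) rfl,
      hA.imPart_apply_mul_apply_swap (i := 4) (j := 5) rfl, h1, h2, h3, h4, h5]
  rw [hchar, exists_two_le_rootMultiplicity_comp_X_sq_iff (tridiagCubic_ne_zero _ _ _ _ _),
    isRoot_zero_tridiagCubic_iff, exists_isRoot_derivative_tridiagCubic_ofReal_iff]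
  exact_mod_cast mul_eq_zero_or_exists_isRoot_derivative_tridiagCubic_iff
    (by rw [h1]; positivity) (by rw [h2]; positivity) (by rw [h3]; positivity)
    (by rw [h4]; positivity) (by rw [h5]; positivity)
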